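/- arXiv:2206.15439 — 3 statements merged into one kernel-verified Lean document; each statement's English description precedes it below -/
import Mathlib

section
/- For any connected graph G of order n ≥ 3, the connected domination number of the middle graph M(G) equals n − 1. -/
open SimpleGraph

/-- `S` is a dominating set of `H`: every vertex is in `S` or adjacent to a vertex of `S`. -/
def IsDomSet {V : Type*} (H : SimpleGraph V) (S : Set V) : Prop :=
  ∀ v : V, ∃ u ∈ S, u = v ∨ H.Adj u v

/-- The connected domination number: minimum size of a dominating set inducing a
connected subgraph. -/
noncomputable def connDomNum {V : Type*} (H : SimpleGraph V) : ℕ :=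
  sInf {k | ∃ S : Set V, IsDomSet H S ∧ (H.induce S).Connected ∧ S.ncard = k}

/-- The outer-connected domination number: minimum size of a dominating set whose
complement induces a connected subgraph. -/
noncomputable def outConnDomNum {V : Type*} (H : SimpleGraph V) : ℕ :=
  sInf {k | ∃ S : Set V, IsDomSet H S ∧ (H.induce Sᶜ).Connected ∧ S.ncard = k}

/-- The middle graph `M(G)`: vertices are `V(G) ∪ E(G)`; a vertex is adjacent to its
incident edges, and two edges are adjacent iff they share a vertex. -/
def middleGraph {V : Type*} (G : SimpleGraph V) : SimpleGraph (V ⊕ G.edgeSet) where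
  Adj x y :=
    match x, y with
    | Sum.inl _, Sum.inl _ => False
    | Sum.inl v, Sum.inr e => v ∈ (e : Sym2 V)
    | Sum.inr e, Sum.inl v => v ∈ (e : Sym2 V)
    | Sum.inr e, Sum.inr f => e ≠ f ∧ ∃ v, v ∈ (e : Sym2 V) ∧ v ∈ (f : Sym2 V)
  symm := by
    constructor
    rintro (v | e) (w | f) h
    · exact h.elim
    · exact h
    · exact h
    · exact ⟨Ne.symm h.1, h.2.imp fun v hv => ⟨hv.2, hv.1⟩⟩
  loopless := by
    constructor
    rintro (v | e) h
    · exact h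
    · exact h.1 rfl

/-- The edge cover number `ρ(G)`: minimum number of edges covering all vertices. -/
noncomputable def edgeCoverNum {V : Type*} (G : SimpleGraph V) : ℕ :=
  sInf {k | ∃ C : Set (Sym2 V), C ⊆ G.edgeSet ∧ (∀ v : V, ∃ e ∈ C, v ∈ e) ∧ C.ncard = k}

/-- The wheel graph with hub `none` and a cycle on `ZMod n` (so `n + 1` vertices). -/
def wheelGraph (n : ℕ) : SimpleGraph (Option (ZMod n)) where
  Adj x y :=
    match x, y with
    | none, none => False
    | none, some _ => True
    | some _, none => True
    | some i, some j => i ≠ j ∧ (i - j = 1 ∨ j - i = 1)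
  symm := by
    constructor
    rintro (_ | i) (_ | j) h
    · exact h.elim
    · trivial
    · trivial
    · exact ⟨h.1.symm, h.2.symm⟩
  loopless := by
    constructor
    rintro (_ | i) h
    · exact h
    · exact h.1 rfl

/-- The friendship graph `F n`: `n` triangles sharing the common vertex `none`. -/
def friendshipGraph (n : ℕ) : SimpleGraph (Option (Fin n × Fin 2)) where
  Adj x y :=
    match x, y with
    | none, none => False
    | none, some _ => True
    | some _, none => True
    | some (i, a), some (j, b) => i = j ∧ a ≠ b
  symm := by
    constructor
    rintro (_ | ⟨i, a⟩) (_ | ⟨j, b⟩) h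
    · exact h.elim
    · trivial
    · trivial
    · exact ⟨h.1.symm, h.2.symm⟩
  loopless := by
    constructor
    rintro (_ | ⟨i, a⟩) h
    · exact h
    · exact h.2 rfl

/-- The corona `G ∘ K₁`: each vertex `Sum.inl v` of `G` gets a pendant vertex `Sum.inr v`. -/
def corona {V : Type*} (G : SimpleGraph V) : SimpleGraph (V ⊕ V) where
  Adj x y :=
    match x, y with
    | Sum.inl v, Sum.inl w => G.Adj v w
    | Sum.inl v, Sum.inr w => v = w
    | Sum.inr v, Sum.inl w => v = w
    | Sum.inr _, Sum.inr _ => False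
  symm := by
    constructor
    rintro (v | v) (w | w) h
    · exact G.adj_symm h
    · exact h.symm
    · exact h.symm
    · exact h.elim
  loopless := by
    constructor
    rintro (v | v) h
    · exact G.loopless.irrefl v h
    · exact h

/-- The 2-corona `G ∘ P₂`: each vertex `Sum.inl v` of `G` gets a pendant path
`Sum.inl v — Sum.inr (Sum.inl v) — Sum.inr (Sum.inr v)`. -/
def corona2 {V : Type*} (G : SimpleGraph V) : SimpleGraph (V ⊕ (V ⊕ V)) where
  Adj x y :=
    match x, y with
    | Sum.inl v, Sum.inl w => G.Adj v w
    | Sum.inl v, Sum.inr (Sum.inl w) => v = w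
    | Sum.inr (Sum.inl v), Sum.inl w => v = w
    | Sum.inr (Sum.inl v), Sum.inr (Sum.inr w) => v = w
    | Sum.inr (Sum.inr v), Sum.inr (Sum.inl w) => v = w
    | _, _ => False
  symm := by
    constructor
    rintro (v | v | v) (w | w | w) h
    · exact G.adj_symm h
    · exact h.symm
    · exact h.elim
    · exact h.symm
    · exact h.elim
    · exact h.symm
    · exact h.elim
    · exact h.symm
    · exact h.elim
  loopless := by
    constructor
    rintro (v | v | v) h
    · exact G.loopless.irrefl v h
    · exact h
    · exact h

/-- The join `G + K̄ p` of `G` with the empty graph on `p` vertices. -/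
def joinEmpty {V : Type*} (G : SimpleGraph V) (p : ℕ) : SimpleGraph (V ⊕ Fin p) where
  Adj x y :=
    match x, y with
    | Sum.inl v, Sum.inl w => G.Adj v w
    | Sum.inl _, Sum.inr _ => True
    | Sum.inr _, Sum.inl _ => True
    | Sum.inr _, Sum.inr _ => False
  symm := by
    constructor
    rintro (v | v) (w | w) h
    · exact G.adj_symm h
    · trivial
    · trivial
    · exact h.elim
  loopless := by
    constructor
    rintro (v | v) h
    · exact G.loopless.irrefl v h
    · exact h

/-! If `S` is a connected dominating set of `M(G)`, the edges of `G` lying in `S` form a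
connected spanning subgraph of `G`, hence number at least `n - 1`: map every vertex of `M(G)`
to a vertex of `G` it equals or contains; adjacent vertices of `M(G)[S]` then go to vertices
joined by edges in `S`, and domination makes every vertex of `G` lie on such an edge.
Conversely, the `n - 1` edges of a spanning tree `T` form a connected dominating set: since
`n ≥ 2` every vertex of `G` lies on an edge of `T`, which dominates it and all edges through it,
and a path in `T` lifts to a path in the line graph of `T`. -/

namespace SimpleGraph

variable {X Y : Type*}

theorem Reachable.lift {G : SimpleGraph X} {H : SimpleGraph Y} (f : X → Y)
    (hf : ∀ x y, G.Adj x y → H.Reachable (f x) (f y)) {x y : X} (h : G.Reachable x y) :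
    H.Reachable (f x) (f y) := by
  rw [reachable_iff_reflTransGen] at h ⊢
  exact h.lift' f fun a b hab => (reachable_iff_reflTransGen _ _).1 (hf a b hab)

end SimpleGraph

theorem connDomNum_eq {X : Type*} {H : SimpleGraph X} {m : ℕ}
    (hS : ∃ S : Set X, IsDomSet H S ∧ (H.induce S).Connected ∧ S.ncard = m)
    (hmin : ∀ S : Set X, IsDomSet H S → (H.induce S).Connected → m ≤ S.ncard) :
    connDomNum H = m :=
  le_antisymm (Nat.sInf_le hS) <| le_csInf ⟨m, hS⟩ fun _ ⟨S, hdom, hconn, hk⟩ =>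
    hk ▸ hmin S hdom hconn

section MiddleGraph

variable {V : Type*} {G : SimpleGraph V}

theorem middleGraph_adj_inl_inl {v w : V} : ¬(middleGraph G).Adj (.inl v) (.inl w) :=
  fun h => h

theorem middleGraph_adj_inr_inr {e f : G.edgeSet} :
    (middleGraph G).Adj (.inr e) (.inr f) ↔
      e ≠ f ∧ ∃ v, v ∈ (e : Sym2 V) ∧ v ∈ (f : Sym2 V) := Iff.rfl

theorem middleGraph_induce_reachable_of_mem_of_mem {S : Set (V ⊕ G.edgeSet)}
    {e f : G.edgeSet} (he : .inr e ∈ S) (hf : .inr f ∈ S) {v : V}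
    (hve : v ∈ (e : Sym2 V)) (hvf : v ∈ (f : Sym2 V)) :
    ((middleGraph G).induce S).Reachable ⟨_, he⟩ ⟨_, hf⟩ := by
  by_cases hef : e = f
  · subst hef
    rfl
  · exact Adj.reachable (middleGraph_adj_inr_inr.2 ⟨hef, v, hve, hvf⟩)

variable (G) in
def edgeVerts (H : SimpleGraph V) : Set (V ⊕ G.edgeSet) :=
  Sum.inr '' {e | (e : Sym2 V) ∈ H.edgeSet}

@[simp]
theorem inr_mem_edgeVerts {H : SimpleGraph V} {e : G.edgeSet} :
    .inr e ∈ edgeVerts G H ↔ (e : Sym2 V) ∈ H.edgeSet := by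
  simp [edgeVerts]

theorem ncard_edgeVerts {H : SimpleGraph V} (hHG : H ≤ G) :
    (edgeVerts G H).ncard = Nat.card H.edgeSet := by
  have himage : Subtype.val '' {e : G.edgeSet | (e : Sym2 V) ∈ H.edgeSet} = H.edgeSet := by
    ext s
    exact ⟨fun ⟨e, he, hes⟩ => hes ▸ he, fun hs => ⟨⟨s, edgeSet_mono hHG hs⟩, hs, rfl⟩⟩
  rw [edgeVerts, Set.ncard_image_of_injective _ Sum.inr_injective,
    ← Set.ncard_image_of_injective _ Subtype.val_injective, himage, Nat.card_coe_set_eq]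

section SpanningSubgraph

variable {T : SimpleGraph V}

theorem exists_inr_mem_edgeVerts_and_mem [Nontrivial V] (hTG : T ≤ G) (hT : T.Connected)
    (v : V) :
    ∃ e : G.edgeSet, .inr e ∈ edgeVerts G T ∧ v ∈ (e : Sym2 V) := by
  obtain ⟨u, hvu⟩ := hT.preconnected.exists_adj_of_nontrivial v
  exact ⟨⟨s(v, u), hTG hvu⟩, inr_mem_edgeVerts.2 hvu, Sym2.mem_mk_left v u⟩

theorem isDomSet_edgeVerts [Nontrivial V] (hTG : T ≤ G) (hT : T.Connected) :
    IsDomSet (middleGraph G) (edgeVerts G T) := by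
  rintro (v | e)
  · obtain ⟨e, he, hve⟩ := exists_inr_mem_edgeVerts_and_mem hTG hT v
    exact ⟨.inr e, he, .inr hve⟩
  · obtain ⟨f, hf, hvf⟩ := exists_inr_mem_edgeVerts_and_mem hTG hT (e : Sym2 V).out.1
    by_cases hfe : f = e
    · exact ⟨.inr f, hf, .inl (congrArg Sum.inr hfe)⟩
    · exact ⟨.inr f, hf, .inr ⟨hfe, _, hvf, Sym2.out_fst_mem _⟩⟩

theorem connected_induce_edgeVerts [Nontrivial V] (hTG : T ≤ G) (hT : T.Connected) :
    ((middleGraph G).induce (edgeVerts G T)).Connected := by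
  choose ψ hψ hvψ using exists_inr_mem_edgeVerts_and_mem hTG hT
  have hreach (a b : V) : ((middleGraph G).induce (edgeVerts G T)).Reachable
      ⟨_, hψ a⟩ ⟨_, hψ b⟩ := by
    refine (hT.preconnected a b).lift (fun v => (⟨_, hψ v⟩ : edgeVerts G T)) fun a b hab => ?_
    have hab' : .inr ⟨s(a, b), hTG hab⟩ ∈ edgeVerts G T := inr_mem_edgeVerts.2 hab
    exact (middleGraph_induce_reachable_of_mem_of_mem _ hab' (hvψ a) (Sym2.mem_mk_left a b)).trans
      (middleGraph_induce_reachable_of_mem_of_mem hab' _ (Sym2.mem_mk_right a b) (hvψ b))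
  obtain ⟨v⟩ := hT.nonempty
  refine (connected_iff _).2 ⟨fun ⟨x, hx⟩ ⟨y, hy⟩ => ?_, ⟨⟨_, hψ v⟩⟩⟩
  obtain ⟨e, -, rfl⟩ := hx
  obtain ⟨f, -, rfl⟩ := hy
  exact (middleGraph_induce_reachable_of_mem_of_mem _ _ (Sym2.out_fst_mem _) (hvψ _)).trans <|
    (hreach _ _).trans
      (middleGraph_induce_reachable_of_mem_of_mem _ _ (hvψ _) (Sym2.out_fst_mem _))

theorem ncard_edgeVerts_of_isTree [Finite V] (hTG : T ≤ G) (hT : T.IsTree) :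
    (edgeVerts G T).ncard = Nat.card V - 1 := by
  rw [ncard_edgeVerts hTG, ← (isTree_iff_connected_and_card.1 hT).2, Nat.add_sub_cancel]

end SpanningSubgraph

section DominatingSet

variable {S : Set (V ⊕ G.edgeSet)}

variable (S) in
def edgeGraph : SimpleGraph V :=
  fromEdgeSet (Subtype.val '' (Sum.inr ⁻¹' S))

variable (S) in
theorem edgeGraph_le : edgeGraph S ≤ G := fun a b h => by
  rw [edgeGraph, fromEdgeSet_adj] at h
  obtain ⟨⟨e, -, he⟩, -⟩ := h
  exact (mem_edgeSet G).1 (he ▸ e.2)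

variable (S) in
theorem edgeVerts_edgeGraph_subset : edgeVerts G (edgeGraph S) ⊆ S := by
  rintro _ ⟨e, he, rfl⟩
  change (e : Sym2 V) ∈ (edgeGraph S).edgeSet at he
  rw [edgeGraph, edgeSet_fromEdgeSet] at he
  obtain ⟨⟨f, hf, hfe⟩, -⟩ := he
  rwa [← Subtype.ext hfe]

theorem edgeGraph_reachable_of_mem {e : G.edgeSet} (he : .inr e ∈ S) {a b : V}
    (ha : a ∈ (e : Sym2 V)) (hb : b ∈ (e : Sym2 V)) : (edgeGraph S).Reachable a b := by
  by_cases hab : a = b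
  · exact hab ▸ Reachable.refl a
  · exact Adj.reachable <|
      (fromEdgeSet_adj _).2 ⟨⟨e, he, (Sym2.mem_and_mem_iff hab).1 ⟨ha, hb⟩⟩, hab⟩

variable (G) in
noncomputable def endpoint : V ⊕ G.edgeSet → V :=
  Sum.elim id fun e => (e : Sym2 V).out.1

theorem edgeGraph_reachable_endpoint {x : V ⊕ G.edgeSet} (hx : x ∈ S) {a : V}
    (hxa : x = .inl a ∨ (middleGraph G).Adj x (.inl a)) :
    (edgeGraph S).Reachable a (endpoint G x) := by
  rcases x with v | e
  · rcases hxa with h | h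
    · cases h
      rfl
    · exact absurd h middleGraph_adj_inl_inl
  · rcases hxa with h | h
    · cases h
    · exact edgeGraph_reachable_of_mem hx h (Sym2.out_fst_mem _)

theorem connected_edgeGraph [Nonempty V] (hdom : IsDomSet (middleGraph G) S)
    (hconn : ((middleGraph G).induce S).Connected) : (edgeGraph S).Connected := by
  have hstep (x y : S) (hxy : ((middleGraph G).induce S).Adj x y) :
      (edgeGraph S).Reachable (endpoint G x) (endpoint G y) := by
    rcases x with ⟨v | e, hx⟩ <;> rcases y with ⟨w | f, hy⟩
    · exact absurd (induce_adj.1 hxy) middleGraph_adj_inl_inl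
    · exact edgeGraph_reachable_endpoint hy (.inr hxy.symm)
    · exact (edgeGraph_reachable_endpoint hx (.inr hxy)).symm
    · obtain ⟨-, v, hve, hvf⟩ := hxy
      exact (edgeGraph_reachable_endpoint hx (.inr hve)).symm.trans
        (edgeGraph_reachable_endpoint hy (.inr hvf))
  refine (connected_iff _).2 ⟨fun a b => ?_, inferInstance⟩
  obtain ⟨x, hx, hxa⟩ := hdom (.inl a)
  obtain ⟨y, hy, hyb⟩ := hdom (.inl b)
  exact (edgeGraph_reachable_endpoint hx hxa).trans <|
    ((hconn.preconnected ⟨x, hx⟩ ⟨y, hy⟩).lift (fun z : S => endpoint G z) hstep).trans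
      (edgeGraph_reachable_endpoint hy hyb).symm

theorem card_sub_one_le_ncard_of_isDomSet [Finite V] (hdom : IsDomSet (middleGraph G) S)
    (hconn : ((middleGraph G).induce S).Connected) : Nat.card V - 1 ≤ S.ncard := by
  rcases isEmpty_or_nonempty V with hV | hV
  · simp
  calc Nat.card V - 1 ≤ Nat.card (edgeGraph S).edgeSet :=
        Nat.sub_le_of_le_add (connected_edgeGraph hdom hconn).card_vert_le_card_edgeSet_add_one
    _ = (edgeVerts G (edgeGraph S)).ncard := (ncard_edgeVerts (edgeGraph_le S)).symm
    _ ≤ S.ncard := Set.ncard_le_ncard (edgeVerts_edgeGraph_subset S)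

end DominatingSet

end MiddleGraph

theorem stmt0 {V : Type*} [Fintype V] (G : SimpleGraph V) (n : ℕ)
    (hn : Fintype.card V = n) (h3 : 3 ≤ n) (hc : G.Connected) :
    connDomNum (middleGraph G) = n - 1 := by
  subst hn
  have : Nontrivial V := Fintype.one_lt_card_iff_nontrivial.1 (by omega)
  obtain ⟨T, hTG, hT⟩ := hc.exists_isTree_le
  rw [← Nat.card_eq_fintype_card]
  exact connDomNum_eq
    ⟨edgeVerts G T, isDomSet_edgeVerts hTG hT.connected,
      connected_induce_edgeVerts hTG hT.connected, ncard_edgeVerts_of_isTree hTG hT⟩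
    fun _ => card_sub_one_le_ncard_of_isDomSet
end

section
/- For any tree T of order n ≥ 2, γ̃_c(L(T)) < γ̃_c(M(T)), where L(T) is the line graph of T and M(T) is the middle graph of T. -/
open SimpleGraph

/-!
The line graph of `T` has `n - 1` vertices, and in any graph the complement of a single
non-isolated vertex is an outer-connected dominating set, so `γ̃_c(L(T)) ≤ n - 2`.

For `M(T)`, charge each vertex `v` of `T` to itself if it lies in the dominating set `S`, and
otherwise to an edge of `S` at `v`. Two vertices outside `S` are never charged to the same edge
`vw`: a walk between them in `M(T) - S` projects to a walk in `T` avoiding `vw`, which is a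
bridge. Hence `γ̃_c(M(T)) ≥ n`.
-/

section OuterConnectedDomination

variable {V : Type*} {H : SimpleGraph V}

theorem outConnDomNum_le {S : Set V} (hS : IsDomSet H S) (hSc : (H.induce Sᶜ).Connected) :
    outConnDomNum H ≤ S.ncard :=
  Nat.sInf_le ⟨S, hS, hSc, rfl⟩

theorem le_outConnDomNum {m : ℕ} (hne : ∃ S, IsDomSet H S ∧ (H.induce Sᶜ).Connected)
    (hm : ∀ S, IsDomSet H S → (H.induce Sᶜ).Connected → m ≤ S.ncard) :
    m ≤ outConnDomNum H := by
  obtain ⟨S, hS, hSc⟩ := hne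
  refine le_csInf ⟨_, S, hS, hSc, rfl⟩ ?_
  rintro _ ⟨S, hS, hSc, rfl⟩
  exact hm S hS hSc

theorem isDomSet_compl_singleton {x y : V} (h : H.Adj x y) : IsDomSet H {x}ᶜ := by
  intro v
  by_cases hv : v = x
  · exact ⟨y, h.ne', Or.inr (hv ▸ h.symm)⟩
  · exact ⟨v, hv, Or.inl rfl⟩

theorem connected_induce_compl_compl_singleton (x : V) :
    (H.induce ({x}ᶜᶜ : Set V)).Connected := by
  rw [compl_compl]
  have : Nonempty ({x} : Set V) := ⟨⟨x, rfl⟩⟩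
  exact ⟨Preconnected.of_subsingleton⟩

theorem outConnDomNum_le_card_sub_one [Finite V] (H : SimpleGraph V) :
    outConnDomNum H ≤ Nat.card V - 1 := by
  by_cases hadj : ∃ x y, H.Adj x y
  · obtain ⟨x, y, h⟩ := hadj
    calc outConnDomNum H ≤ ({x}ᶜ : Set V).ncard :=
          outConnDomNum_le (isDomSet_compl_singleton h) (connected_induce_compl_compl_singleton x)
      _ = Nat.card V - 1 := by rw [Set.ncard_compl, Set.ncard_singleton]
  · -- without edges no outer-connected dominating set exists, and `sInf ∅ = 0`
    suffices h : {k | ∃ S, IsDomSet H S ∧ (H.induce Sᶜ).Connected ∧ S.ncard = k} = ∅ by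
      simp [outConnDomNum, h]
    refine Set.eq_empty_of_forall_notMem ?_
    rintro k ⟨S, hS, hSc, -⟩
    obtain ⟨⟨x, hx⟩⟩ := hSc.nonempty
    obtain ⟨u, hu, rfl | hux⟩ := hS x
    · exact hx hu
    · exact hadj ⟨u, x, hux⟩

end OuterConnectedDomination

namespace SimpleGraph

variable {V : Type*} {G : SimpleGraph V}

def middleEdgesIn (S : Set (V ⊕ G.edgeSet)) : Set (Sym2 V) :=
  Subtype.val '' (Sum.inr ⁻¹' S)

noncomputable def middleToVertex : V ⊕ G.edgeSet → V
  | Sum.inl v => v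
  | Sum.inr e => (e : Sym2 V).out.1

theorem middleToVertex_mem (e : G.edgeSet) :
    middleToVertex (Sum.inr e) ∈ (e : Sym2 V) :=
  Sym2.out_fst_mem _

theorem reachable_deleteEdges_of_mem_edge {S : Set (V ⊕ G.edgeSet)} {e : G.edgeSet}
    (he : Sum.inr e ∉ S) {u w : V} (hu : u ∈ (e : Sym2 V)) (hw : w ∈ (e : Sym2 V)) :
    (G.deleteEdges (middleEdgesIn S)).Reachable u w := by
  rcases eq_or_ne u w with rfl | hne
  · rfl
  have hue : (e : Sym2 V) = s(u, w) := (Sym2.mem_and_mem_iff hne).mp ⟨hu, hw⟩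
  refine Adj.reachable (deleteEdges_adj.mpr ⟨(mem_edgeSet G).mp (hue ▸ e.2), ?_⟩)
  rintro ⟨f, hf, hfe⟩
  exact he (Subtype.ext (hfe.trans hue.symm) ▸ hf)

theorem reachable_deleteEdges_of_reachable_induce_middleGraph {S : Set (V ⊕ G.edgeSet)}
    {x y : (Sᶜ : Set (V ⊕ G.edgeSet))} (h : ((middleGraph G).induce Sᶜ).Reachable x y) :
    (G.deleteEdges (middleEdgesIn S)).Reachable (middleToVertex x.1) (middleToVertex y.1) := by
  rw [reachable_iff_reflTransGen] at h ⊢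
  refine h.lift' (fun z : (Sᶜ : Set (V ⊕ G.edgeSet)) => middleToVertex z.1) ?_
  intro x y hxy
  have hadj : (middleGraph G).Adj x.1 y.1 := hxy
  rw [Function.onFun, ← reachable_iff_reflTransGen]
  obtain ⟨a | e, ha⟩ := x <;> obtain ⟨b | f, hb⟩ := y
  · exact hadj.elim
  · exact reachable_deleteEdges_of_mem_edge hb hadj (middleToVertex_mem f)
  · exact reachable_deleteEdges_of_mem_edge ha (middleToVertex_mem e) hadj
  · obtain ⟨-, c, hce, hcf⟩ := hadj
    exact (reachable_deleteEdges_of_mem_edge ha (middleToVertex_mem e) hce).trans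
      (reachable_deleteEdges_of_mem_edge hb hcf (middleToVertex_mem f))

theorem IsAcyclic.eq_of_mem_of_inr_mem (hG : G.IsAcyclic) {S : Set (V ⊕ G.edgeSet)}
    (hSc : ((middleGraph G).induce Sᶜ).Preconnected) {v w : V}
    (hv : Sum.inl v ∉ S) (hw : Sum.inl w ∉ S) {e : G.edgeSet} (he : Sum.inr e ∈ S)
    (hve : v ∈ (e : Sym2 V)) (hwe : w ∈ (e : Sym2 V)) : v = w := by
  by_contra hne
  have hev : (e : Sym2 V) = s(v, w) := (Sym2.mem_and_mem_iff hne).mp ⟨hve, hwe⟩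
  have hadj : G.Adj v w := (mem_edgeSet G).mp (hev ▸ e.2)
  have hreach := reachable_deleteEdges_of_reachable_induce_middleGraph
    (hSc ⟨Sum.inl v, hv⟩ ⟨Sum.inl w, hw⟩)
  refine isBridge_iff.mp (isAcyclic_iff_forall_adj_isBridge.mp hG hadj)
    (hreach.mono (deleteEdges_anti ?_))
  rintro _ rfl
  exact ⟨e, he, hev⟩

theorem IsAcyclic.card_le_ncard_of_isDomSet_middleGraph [Finite V] (hG : G.IsAcyclic)
    {S : Set (V ⊕ G.edgeSet)} (hS : IsDomSet (middleGraph G) S)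
    (hSc : ((middleGraph G).induce Sᶜ).Preconnected) : Nat.card V ≤ S.ncard := by
  classical
  have hedge : ∀ v, Sum.inl v ∉ S → ∃ e : G.edgeSet, Sum.inr e ∈ S ∧ v ∈ (e : Sym2 V) := by
    intro v hv
    obtain ⟨_ | e, hu, huv | huv⟩ := hS (Sum.inl v)
    · exact absurd (huv ▸ hu) hv
    · exact huv.elim
    · exact absurd huv Sum.inr_ne_inl
    · exact ⟨e, hu, huv⟩
  choose pick hpickS hpick using hedge
  let f : V → V ⊕ G.edgeSet := fun v =>
    if hv : Sum.inl v ∈ S then Sum.inl v else Sum.inr (pick v hv)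
  have hfS : ∀ v ∈ Set.univ, f v ∈ S := by
    intro v _
    by_cases hv : Sum.inl v ∈ S
    · simp [f, hv]
    · simpa [f, hv] using hpickS v hv
  have hf : Set.InjOn f Set.univ := by
    intro v _ w _ hvw
    by_cases hv : Sum.inl v ∈ S <;> by_cases hw : Sum.inl w ∈ S <;>
      simp only [f, hv, hw, dite_true, dite_false, Sum.inl.injEq, reduceCtorEq,
        Sum.inr.injEq] at hvw
    · exact hvw
    · exact hG.eq_of_mem_of_inr_mem hSc hv hw (hpickS v hv) (hpick v hv) (hvw ▸ hpick w hw)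
  simpa using Set.ncard_le_ncard_of_injOn f hfS hf

theorem IsAcyclic.card_le_outConnDomNum_middleGraph [Finite V] (hG : G.IsAcyclic)
    (hE : G.edgeSet.Nonempty) : Nat.card V ≤ outConnDomNum (middleGraph G) := by
  obtain ⟨e, he⟩ := hE
  induction e using Sym2.ind with
  | h a b =>
    have hadj : (middleGraph G).Adj (Sum.inl a) (Sum.inr ⟨s(a, b), he⟩) := Sym2.mem_mk_left a b
    exact le_outConnDomNum
      ⟨_, isDomSet_compl_singleton hadj, connected_induce_compl_compl_singleton _⟩
      fun S hS hSc => hG.card_le_ncard_of_isDomSet_middleGraph hS hSc.preconnected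

end SimpleGraph

theorem stmt4 {V : Type*} [Fintype V] (T : SimpleGraph V)
    (h2 : 2 ≤ Fintype.card V) (hT : T.IsTree) :
    outConnDomNum T.lineGraph < outConnDomNum (middleGraph T) := by
  rw [← Nat.card_eq_fintype_card] at h2
  have hcard : Nat.card T.edgeSet + 1 = Nat.card V := (isTree_iff_connected_and_card.mp hT).2
  have hE : T.edgeSet.Nonempty := Set.nonempty_coe_sort.mp (Nat.card_pos_iff.mp (by omega)).1
  calc outConnDomNum T.lineGraph ≤ Nat.card T.edgeSet - 1 := outConnDomNum_le_card_sub_one _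
    _ < Nat.card V := by omega
    _ ≤ outConnDomNum (middleGraph T) := hT.isAcyclic.card_le_outConnDomNum_middleGraph hE
end

section
/- Let G be a connected graph with n ≥ 4 vertices that is not a tree. Then n + ⌈n/2⌉ − 1 ≤ γ_c(M(G)) + γ̃_c(M(G)) ≤ 2n − 2 and ⌈n/2⌉(n − 1) ≤ γ_c(M(G)) · γ̃_c(M(G)) ≤ (n − 1)². -/
open SimpleGraph

/-!
In `M(G)` every vertex dominates at most two vertices of `G`, so any dominating set has at
least `⌈n/2⌉` elements. If a dominating set `S` induces a connected subgraph, the edges of `G`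
lying in `S` form a connected spanning subgraph of `G`, hence there are at least `n - 1` of them;
the edges of a spanning tree show that `γ_c(M(G)) = n - 1`. Since `G` is not a tree it has an
edge `vw` that is not a bridge; then `(V ∖ {v, w}) ∪ {vw}` dominates `M(G)`, and its complement
contains all edges of the connected graph `G - vw`, so `γ̃_c(M(G)) ≤ n - 1`.
-/

theorem SimpleGraph.Reachable.lift_s15 {α β : Type*} {G : SimpleGraph α} {H : SimpleGraph β}
    (φ : α → β) (h : ∀ a b, G.Adj a b → H.Reachable (φ a) (φ b)) {a b : α}
    (hab : G.Reachable a b) : H.Reachable (φ a) (φ b) := by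
  rw [reachable_iff_reflTransGen] at hab
  induction hab with
  | refl => rfl
  | tail _ hbc ih => exact ih.trans (h _ _ hbc)

section MiddleGraph

variable {V : Type*} {G : SimpleGraph V}

lemma exists_eq_or_eq_of_dominates_inl (x : V ⊕ G.edgeSet) :
    ∃ a b : V, ∀ v, (x = .inl v ∨ (middleGraph G).Adj x (.inl v)) → v = a ∨ v = b := by
  rcases x with u | ⟨⟨⟨a, b⟩⟩, hab⟩
  · refine ⟨u, u, fun v hv => ?_⟩
    rcases hv with h | h
    · exact .inl (Sum.inl_injective h).symm
    · exact h.elim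
  · refine ⟨a, b, fun v hv => ?_⟩
    rcases hv with h | h
    · exact (Sum.inr_ne_inl h).elim
    · exact Sym2.mem_iff.mp h

lemma isDomSet_middleGraph_of_forall_exists_mem {S : Set (V ⊕ G.edgeSet)}
    (hS : ∀ v : V, ∃ f : G.edgeSet, .inr f ∈ S ∧ v ∈ (f : Sym2 V)) :
    IsDomSet (middleGraph G) S := by
  rintro (v | g)
  · obtain ⟨f, hf, hvf⟩ := hS v
    exact ⟨.inr f, hf, .inr hvf⟩
  · obtain ⟨f, hf, hvf⟩ := hS (g : Sym2 V).out.1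
    by_cases hfg : f = g
    · exact ⟨.inr f, hf, .inl (hfg ▸ rfl)⟩
    · exact ⟨.inr f, hf, .inr ⟨hfg, _, hvf, Sym2.out_fst_mem _⟩⟩

lemma reachable_induce_middleGraph_of_mem {P : Set (V ⊕ G.edgeSet)} {f g : G.edgeSet}
    (hf : .inr f ∈ P) (hg : .inr g ∈ P) {v : V} (hvf : v ∈ (f : Sym2 V))
    (hvg : v ∈ (g : Sym2 V)) :
    ((middleGraph G).induce P).Reachable ⟨.inr f, hf⟩ ⟨.inr g, hg⟩ := by
  by_cases hfg : f = g
  · subst hfg; rfl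
  · exact Adj.reachable (show (middleGraph G).Adj (.inr f) (.inr g) from ⟨hfg, v, hvf, hvg⟩)

theorem connected_induce_middleGraph [Nontrivial V] {H : SimpleGraph V} (hHG : H ≤ G)
    (hH : H.Connected) {P : Set (V ⊕ G.edgeSet)}
    (hP : ∀ f : G.edgeSet, (f : Sym2 V) ∈ H.edgeSet → .inr f ∈ P) :
    ((middleGraph G).induce P).Connected := by
  have hmem (a b : V) (h : H.Adj a b) : .inr ⟨s(a, b), hHG h⟩ ∈ P := hP _ h
  choose nbr hnbr using hH.preconnected.exists_adj_of_nontrivial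
  let φ (a : V) : P := ⟨.inr ⟨s(a, nbr a), hHG (hnbr a)⟩, hmem _ _ (hnbr a)⟩
  have hφ (a b : V) (h : H.Adj a b) : ((middleGraph G).induce P).Reachable (φ a) (φ b) :=
    (reachable_induce_middleGraph_of_mem _ (hmem a b h) (Sym2.mem_mk_left _ _)
      (Sym2.mem_mk_left _ _)).trans
    (reachable_induce_middleGraph_of_mem _ _ (Sym2.mem_mk_right _ _) (Sym2.mem_mk_left _ _))
  have hreach (x : P) : ∃ a, ((middleGraph G).induce P).Reachable x (φ a) := by
    obtain ⟨v | f, hx⟩ := x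
    · exact ⟨v, Adj.reachable (show v ∈ s(v, nbr v) from Sym2.mem_mk_left _ _)⟩
    · exact ⟨_, reachable_induce_middleGraph_of_mem hx _ (Sym2.out_fst_mem _)
        (Sym2.mem_mk_left _ _)⟩
  have : Nonempty P := ⟨φ (Classical.arbitrary V)⟩
  refine ⟨fun x y => ?_⟩
  obtain ⟨a, hxa⟩ := hreach x
  obtain ⟨b, hyb⟩ := hreach y
  exact hxa.trans ((Reachable.lift_s15 φ hφ (hH.preconnected a b)).trans hyb.symm)

theorem card_le_two_mul_ncard_of_isDomSet [Fintype V] {S : Set (V ⊕ G.edgeSet)}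
    (hdom : IsDomSet (middleGraph G) S) : Fintype.card V ≤ 2 * S.ncard := by
  classical
  choose d hdS hd using fun v : V => hdom (.inl v)
  have hfiber (x : V ⊕ G.edgeSet) : (Finset.univ.filter fun v => d v = x).card ≤ 2 := by
    obtain ⟨a, b, hab⟩ := exists_eq_or_eq_of_dominates_inl x
    refine (Finset.card_le_card (t := {a, b}) fun v hv => ?_).trans Finset.card_le_two
    simp only [Finset.mem_filter, Finset.mem_univ, true_and] at hv
    simpa using hab v (hv ▸ hd v)
  have himage : (Finset.univ.image d).card ≤ S.ncard := by
    rw [← Set.ncard_coe_finset]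
    exact Set.ncard_le_ncard (by simpa [Set.subset_def] using hdS)
  calc Fintype.card V ≤ 2 * (Finset.univ.image d).card :=
        Finset.card_le_mul_card_image _ 2 fun x _ => hfiber x
    _ ≤ 2 * S.ncard := by omega

theorem card_sub_one_le_ncard_of_connected_isDomSet [Finite V] {S : Set (V ⊕ G.edgeSet)}
    (hdom : IsDomSet (middleGraph G) S) (hconn : ((middleGraph G).induce S).Connected) :
    Nat.card V - 1 ≤ S.ncard := by
  set F : Set G.edgeSet := Sum.inr ⁻¹' S
  set H : SimpleGraph V := fromEdgeSet (Subtype.val '' F)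
  have hedge (f : G.edgeSet) (hf : .inr f ∈ S) (a b : V) (ha : a ∈ (f : Sym2 V))
      (hb : b ∈ (f : Sym2 V)) : H.Reachable a b := by
    by_cases hab : a = b
    · exact hab ▸ .rfl
    · refine Adj.reachable ((fromEdgeSet_adj _).mpr ⟨⟨f, hf, ?_⟩, hab⟩)
      exact ((Sym2.mem_and_mem_iff hab).mp ⟨ha, hb⟩)
  let endpoint (x : S) : V := Sum.elim id (fun f : G.edgeSet => (f : Sym2 V).out.1) x.1
  have hstep (x y : S) (hxy : ((middleGraph G).induce S).Adj x y) :
      H.Reachable (endpoint x) (endpoint y) := by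
    obtain ⟨u | f, hx⟩ := x <;> obtain ⟨w | g, hy⟩ := y
    · exact hxy.elim
    · exact hedge g hy _ _ hxy (Sym2.out_fst_mem _)
    · exact hedge f hx _ _ (Sym2.out_fst_mem _) hxy
    · obtain ⟨-, c, hcf, hcg⟩ := hxy
      exact (hedge f hx _ _ (Sym2.out_fst_mem _) hcf).trans
        (hedge g hy _ _ hcg (Sym2.out_fst_mem _))
  have hdom' (a : V) : ∃ x : S, H.Reachable a (endpoint x) := by
    obtain ⟨u | f, hu, h | h⟩ := hdom (.inl a)
    · exact ⟨⟨_, hu⟩, (Sum.inl_injective h) ▸ .rfl⟩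
    · exact h.elim
    · exact (Sum.inr_ne_inl h).elim
    · exact ⟨⟨_, hu⟩, hedge f hu _ _ h (Sym2.out_fst_mem _)⟩
  have hH : H.Preconnected := fun a b => by
    obtain ⟨x, hx⟩ := hdom' a
    obtain ⟨y, hy⟩ := hdom' b
    exact hx.trans ((Reachable.lift_s15 endpoint hstep (hconn.preconnected x y)).trans hy.symm)
  rcases isEmpty_or_nonempty V with hV | hV
  · simp
  have hedges : Nat.card H.edgeSet ≤ S.ncard := by
    rw [Nat.card_coe_set_eq]
    calc H.edgeSet.ncard ≤ (Subtype.val '' F).ncard :=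
          Set.ncard_le_ncard (by simp [H, edgeSet_fromEdgeSet])
      _ = (Sum.inr '' F).ncard := by
          rw [Set.ncard_image_of_injective _ Subtype.val_injective,
            Set.ncard_image_of_injective _ Sum.inr_injective]
      _ ≤ S.ncard := Set.ncard_le_ncard (Set.image_preimage_subset _ _)
  have := (Connected.mk hH).card_vert_le_card_edgeSet_add_one
  omega

theorem exists_connected_isDomSet_middleGraph [Finite V] [Nontrivial V] (hc : G.Connected) :
    ∃ S : Set (V ⊕ G.edgeSet), IsDomSet (middleGraph G) S ∧
      ((middleGraph G).induce S).Connected ∧ S.ncard = Nat.card V - 1 := by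
  obtain ⟨T, hTG, hT⟩ := hc.exists_isTree_le
  set F : Set G.edgeSet := Subtype.val ⁻¹' T.edgeSet
  refine ⟨Sum.inr '' F, isDomSet_middleGraph_of_forall_exists_mem fun v => ?_,
    connected_induce_middleGraph hTG hT.connected fun f hf => ⟨f, hf, rfl⟩, ?_⟩
  · obtain ⟨u, hvu⟩ := hT.connected.preconnected.exists_adj_of_nontrivial v
    exact ⟨⟨s(v, u), hTG hvu⟩, ⟨_, hvu, rfl⟩, Sym2.mem_mk_left _ _⟩
  · have hcard := ((isTree_iff_connected_and_card).mp hT).2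
    rw [Set.ncard_image_of_injective _ Sum.inr_injective,
      Set.ncard_preimage_of_injective_subset_range Subtype.val_injective
        (by simpa using edgeSet_mono hTG),
      ← Nat.card_coe_set_eq]
    omega

theorem exists_outerConnected_isDomSet_middleGraph [Finite V] {v w : V} (hc : G.Connected)
    (hvw : G.Adj v w) (hb : ¬ G.IsBridge s(v, w)) :
    ∃ S : Set (V ⊕ G.edgeSet), IsDomSet (middleGraph G) S ∧
      ((middleGraph G).induce Sᶜ).Connected ∧ S.ncard = Nat.card V - 1 := by
  have : Nontrivial V := ⟨⟨v, w, hvw.ne⟩⟩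
  set e : G.edgeSet := ⟨s(v, w), hvw⟩
  set S : Set (V ⊕ G.edgeSet) := Sum.inl '' {v, w}ᶜ ∪ {.inr e}
  have hdom : IsDomSet (middleGraph G) S := by
    rintro (u | f)
    · by_cases hu : u = v ∨ u = w
      · exact ⟨.inr e, by simp [S], .inr (Sym2.mem_iff.mpr hu)⟩
      · exact ⟨.inl u, by simp_all [S], .inl rfl⟩
    by_cases hfe : f = e
    · exact ⟨.inr e, by simp [S], .inl (hfe ▸ rfl)⟩
    · obtain ⟨c, hcf, hc⟩ : ∃ c ∈ (f : Sym2 V), ¬(c = v ∨ c = w) := by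
        obtain ⟨⟨⟨a, b⟩⟩, hab⟩ := f
        have hne : a ≠ b := (mem_edgeSet G).mp hab |>.ne
        by_contra! h
        have ha := h a (Sym2.mem_mk_left _ _)
        have hb := h b (Sym2.mem_mk_right _ _)
        apply hfe
        rcases ha with rfl | rfl <;> rcases hb with rfl | rfl <;>
          simp_all [e, Sym2.eq_swap]
      exact ⟨.inl c, by simp_all [S], .inr hcf⟩
  have hconn : ((middleGraph G).induce Sᶜ).Connected := by
    refine connected_induce_middleGraph (deleteEdges_le _)
      (hc.connected_delete_edge_of_not_isBridge hb) fun f hf => ?_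
    rw [edgeSet_deleteEdges] at hf
    have : f ≠ e := fun h => hf.2 (congrArg Subtype.val h)
    simp [S, this]
  refine ⟨S, hdom, hconn, ?_⟩
  have hpair := Set.ncard_add_ncard_compl ({v, w} : Set V)
  rw [Set.ncard_pair hvw.ne] at hpair
  rw [Set.ncard_union_eq (by simp), Set.ncard_image_of_injective _ Sum.inl_injective,
    Set.ncard_singleton]
  omega

theorem connDomNum_middleGraph [Finite V] [Nontrivial V] (hc : G.Connected) :
    connDomNum (middleGraph G) = Nat.card V - 1 := by
  obtain ⟨S, hS⟩ := exists_connected_isDomSet_middleGraph hc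
  refine le_antisymm (Nat.sInf_le ⟨S, hS⟩) (le_csInf ⟨_, S, hS⟩ ?_)
  rintro k ⟨T, hdom, hconn, rfl⟩
  exact card_sub_one_le_ncard_of_connected_isDomSet hdom hconn

theorem outConnDomNum_middleGraph_le [Finite V] {v w : V} (hc : G.Connected)
    (hvw : G.Adj v w) (hb : ¬ G.IsBridge s(v, w)) :
    outConnDomNum (middleGraph G) ≤ Nat.card V - 1 :=
  Nat.sInf_le (exists_outerConnected_isDomSet_middleGraph hc hvw hb)

theorem le_outConnDomNum_middleGraph [Fintype V] {v w : V} (hc : G.Connected)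
    (hvw : G.Adj v w) (hb : ¬ G.IsBridge s(v, w)) :
    (Fintype.card V + 1) / 2 ≤ outConnDomNum (middleGraph G) := by
  refine le_csInf ⟨_, exists_outerConnected_isDomSet_middleGraph hc hvw hb⟩ ?_
  rintro k ⟨S, hdom, -, rfl⟩
  have := card_le_two_mul_ncard_of_isDomSet hdom
  omega

end MiddleGraph

theorem stmt15_general {V : Type*} [Fintype V] (G : SimpleGraph V) (n : ℕ)
    (hn : Fintype.card V = n) (hc : G.Connected) (ht : ¬ G.IsTree) :
    (n + (n + 1) / 2 - 1 ≤ connDomNum (middleGraph G) + outConnDomNum (middleGraph G) ∧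
      connDomNum (middleGraph G) + outConnDomNum (middleGraph G) ≤ 2 * n - 2) ∧
    ((n + 1) / 2 * (n - 1) ≤ connDomNum (middleGraph G) * outConnDomNum (middleGraph G) ∧
      connDomNum (middleGraph G) * outConnDomNum (middleGraph G) ≤ (n - 1) ^ 2) := by
  obtain ⟨v, w, hvw, hb⟩ : ∃ v w, G.Adj v w ∧ ¬ G.IsBridge s(v, w) := by
    by_contra! h
    exact ht ⟨hc, isAcyclic_iff_forall_adj_isBridge.mpr h⟩
  have : Nontrivial V := ⟨⟨v, w, hvw.ne⟩⟩
  subst hn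
  have hγ := connDomNum_middleGraph hc
  have hlo := le_outConnDomNum_middleGraph hc hvw hb
  have hup := outConnDomNum_middleGraph_le hc hvw hb
  rw [Nat.card_eq_fintype_card] at hγ hup
  rw [hγ]
  refine ⟨⟨by omega, by omega⟩, ?_, ?_⟩
  · exact (Nat.mul_le_mul hlo le_rfl).trans_eq (mul_comm _ _)
  · rw [sq]
    exact Nat.mul_le_mul le_rfl hup

theorem stmt15 {V : Type*} [Fintype V] (G : SimpleGraph V) (n : ℕ)
    (hn : Fintype.card V = n) (h4 : 4 ≤ n) (hc : G.Connected) (ht : ¬ G.IsTree) :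
    (n + (n + 1) / 2 - 1 ≤ connDomNum (middleGraph G) + outConnDomNum (middleGraph G) ∧
      connDomNum (middleGraph G) + outConnDomNum (middleGraph G) ≤ 2 * n - 2) ∧
    ((n + 1) / 2 * (n - 1) ≤ connDomNum (middleGraph G) * outConnDomNum (middleGraph G) ∧
      connDomNum (middleGraph G) * outConnDomNum (middleGraph G) ≤ (n - 1) ^ 2) :=
  stmt15_general G n hn hc ht
end
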